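/- Let q be a positive integer and let W be a finite set of pairs (u,U) of integers with gcd(u,U) = 1. Define R_q(W) as the number of pairs ((u,U),(v,V)) ∈ W × W with U·v ≡ u·V (mod q). Then R_q(W) = ∑_{r ∣ q} ∑_{k=1}^{q/r} (1/(q/r)) · |∑_{(u,U)∈W, gcd(u,q)=r} e_{q/r}(U·(u/r)⁻¹·k)|², where (u/r)⁻¹ denotes the inverse of u/r modulo q/r. -/

import Mathlib

/-!
Split the pairs according to `r = gcd(u, q)`: since `gcd(u, U) = gcd(v, V) = 1`, the congruence
`U v ≡ u V (mod q)` forces `gcd(v, q) = gcd(u, q)`. Inside the class `r`, cancelling `r` and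
multiplying by the inverses of `u/r` and `v/r` turns the congruence into
`U (u/r)⁻¹ ≡ V (v/r)⁻¹ (mod q/r)`, and the number of pairs with equal residues modulo `m` is
`(1/m) ∑_k |∑_p e_m(a_p k)|²` by orthogonality of the additive characters of `ZMod m`.
-/

open Complex Finset

theorem ZMod.sum_Icc_one_natCast {M : Type*} [AddCommMonoid M] (m : ℕ) [NeZero m]
    (f : ZMod m → M) : ∑ k ∈ Icc 1 m, f k = ∑ k : ZMod m, f k := by
  obtain ⟨n, rfl⟩ : ∃ n, m = n + 1 := Nat.exists_eq_succ_of_ne_zero (NeZero.ne m)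
  have hshift : ∑ k ∈ Icc 1 (n + 1), f k = ∑ k ∈ range (n + 1), f (k + 1 : ℕ) := by
    rw [range_eq_Ico, sum_Ico_add' (fun k : ℕ => f k), ← Ico_add_one_right_eq_Icc]
  have hperiod : ∑ k ∈ range (n + 1), f (k + 1 : ℕ) = ∑ k ∈ range (n + 1), f k := by
    rw [sum_range_succ, sum_range_succ' (fun k : ℕ => f k), ZMod.natCast_self, Nat.cast_zero]
  rw [hshift, hperiod, ← Fin.sum_univ_eq_sum_range (fun k => f k)]
  exact Fintype.sum_congr _ _ fun i => congrArg f (ZMod.natCast_zmod_val (n := n + 1) i)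

theorem AddChar.sum_norm_sq_sum_apply_mul_eq {R α : Type*} [CommRing R] [Fintype R]
    [DecidableEq R] {ψ : AddChar R ℂ} (hψ : ψ.IsPrimitive) (F : Finset α) (b : α → R) :
    ∑ k : R, ‖∑ p ∈ F, ψ (b p * k)‖ ^ 2 = Fintype.card R * #{x ∈ F ×ˢ F | b x.1 = b x.2} := by
  have hexpand (k : R) :
      (‖∑ p ∈ F, ψ (b p * k)‖ : ℂ) ^ 2 = ∑ x ∈ F ×ˢ F, ψ (k * (b x.1 - b x.2)) := by
    rw [← Complex.mul_conj', map_sum, sum_mul_sum, sum_product]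
    refine sum_congr rfl fun x _ => sum_congr rfl fun y _ => ?_
    rw [← AddChar.map_neg_eq_conj, ← AddChar.map_add_eq_mul]
    ring_nf
  apply Complex.ofReal_injective
  push_cast
  simp_rw [hexpand]
  rw [sum_comm]
  simp_rw [AddChar.sum_mulShift _ hψ, sub_eq_zero]
  rw [← Nat.cast_sum, ← sum_filter, sum_const, smul_eq_mul, Nat.cast_mul, mul_comm]

theorem cross_mul_eq_iff_of_mul_eq_one {M : Type*} [CommMonoid M] {a b c d x y : M}
    (ha : a * x = 1) (hb : b * y = 1) : c * b = a * d ↔ c * x = d * y := by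
  constructor
  · intro h
    calc c * x = c * x * (b * y) := by rw [hb, mul_one]
      _ = c * b * x * y := by ac_rfl
      _ = a * d * x * y := by rw [h]
      _ = d * y * (a * x) := by ac_rfl
      _ = d * y := by rw [ha, mul_one]
  · intro h
    calc c * b = c * b * (a * x) := by rw [ha, mul_one]
      _ = c * x * a * b := by ac_rfl
      _ = d * y * a * b := by rw [h]
      _ = a * d * (b * y) := by ac_rfl
      _ = a * d := by rw [hb, mul_one]

theorem Int.cross_mul_modEq_iff_of_mul_modEq_one {m : ℕ} {r u U v V x y : ℤ} (hr : r ≠ 0)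
    (hu : r ∣ u) (hv : r ∣ v) (hx : u / r * x ≡ 1 [ZMOD m]) (hy : v / r * y ≡ 1 [ZMOD m]) :
    U * v ≡ u * V [ZMOD r * m] ↔ U * x ≡ V * y [ZMOD m] := by
  obtain ⟨u, rfl⟩ := hu
  obtain ⟨v, rfl⟩ := hv
  rw [Int.mul_ediv_cancel_left _ hr] at hx hy
  rw [mul_left_comm, mul_assoc, Int.ModEq.mul_left_cancel_iff' hr]
  simp only [← ZMod.intCast_eq_intCast_iff, Int.cast_mul, Int.cast_one] at hx hy ⊢
  exact cross_mul_eq_iff_of_mul_eq_one hx hy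

theorem Int.gcd_dvd_gcd_of_cross_mul_modEq {q u U v V : ℤ} (hu : Int.gcd u U = 1)
    (h : U * v ≡ u * V [ZMOD q]) : Int.gcd u q ∣ Int.gcd v q := by
  have hdu : (Int.gcd u q : ℤ) ∣ u := Int.gcd_dvd_left _ _
  have hdq : (Int.gcd u q : ℤ) ∣ q := Int.gcd_dvd_right _ _
  have hdUv : (Int.gcd u q : ℤ) ∣ U * v := (h.of_dvd hdq).dvd_iff.mpr (hdu.mul_right V)
  have hdU : IsCoprime (Int.gcd u q : ℤ) U :=
    (Int.isCoprime_iff_gcd_eq_one.mpr hu).of_isCoprime_of_dvd_left hdu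
  exact Int.natCast_dvd_natCast.mp (Int.dvd_coe_gcd (hdU.dvd_of_dvd_mul_left hdUv) hdq)

theorem Int.gcd_eq_gcd_of_cross_mul_modEq {q u U v V : ℤ} (hu : Int.gcd u U = 1)
    (hv : Int.gcd v V = 1) (h : U * v ≡ u * V [ZMOD q]) : Int.gcd u q = Int.gcd v q :=
  Nat.dvd_antisymm (Int.gcd_dvd_gcd_of_cross_mul_modEq hu h)
    (Int.gcd_dvd_gcd_of_cross_mul_modEq hv (by rw [mul_comm V, mul_comm v]; exact h.symm))

theorem card_modEq_eq_sum_norm_sq_sum_exp {α : Type*} (m : ℕ) [NeZero m] (F : Finset α)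
    (a : α → ℤ) :
    (#{x ∈ F ×ˢ F | a x.1 ≡ a x.2 [ZMOD m]} : ℝ) =
      ∑ k ∈ Icc 1 m, 1 / (m : ℝ) * ‖∑ p ∈ F, exp (2 * Real.pi * I * (a p * k) / m)‖ ^ 2 := by
  have hchar (p : α) (k : ℕ) :
      exp (2 * Real.pi * I * (a p * k) / m) = ZMod.stdAddChar ((a p : ZMod m) * (k : ZMod m)) := by
    simpa using (ZMod.stdAddChar_coe (N := m) (a p * k)).symm
  simp_rw [hchar, ← mul_sum]
  rw [ZMod.sum_Icc_one_natCast m (fun k => ‖∑ p ∈ F, ZMod.stdAddChar ((a p : ZMod m) * k)‖ ^ 2),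
    AddChar.sum_norm_sq_sum_apply_mul_eq (ZMod.isPrimitive_stdAddChar m), ZMod.card]
  simp only [ZMod.intCast_eq_intCast_iff]
  field_simp [NeZero.ne m]

theorem filter_gcd_eq_filter_modEq {W : Finset (ℤ × ℤ)} (hW : ∀ p ∈ W, Int.gcd p.1 p.2 = 1)
    {q r : ℕ} (hrq : r ∣ q) (hr : r ≠ 0) {x : ℤ → ℤ}
    (hx : ∀ p ∈ W, Int.gcd p.1 q = r → p.1 / r * x p.1 ≡ 1 [ZMOD (q / r : ℕ)]) :
    {y ∈ {y ∈ W ×ˢ W | y.1.2 * y.2.1 ≡ y.1.1 * y.2.2 [ZMOD q]} | Int.gcd y.1.1 q = r} =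
      {y ∈ {p ∈ W | Int.gcd p.1 q = r} ×ˢ {p ∈ W | Int.gcd p.1 q = r} |
        y.1.2 * x y.1.1 ≡ y.2.2 * x y.2.1 [ZMOD (q / r : ℕ)]} := by
  ext ⟨⟨u, U⟩, ⟨v, V⟩⟩
  simp only [mem_filter, mem_product]
  have hq : (q : ℤ) = r * (q / r : ℕ) := by exact_mod_cast (Nat.mul_div_cancel' hrq).symm
  have hreduce (hu : (u, U) ∈ W) (hv : (v, V) ∈ W) (hur : Int.gcd u q = r)
      (hvr : Int.gcd v q = r) :
      U * v ≡ u * V [ZMOD q] ↔ U * x u ≡ V * x v [ZMOD (q / r : ℕ)] := by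
    rw [hq]
    exact Int.cross_mul_modEq_iff_of_mul_modEq_one (Int.natCast_ne_zero.mpr hr)
      (hur ▸ Int.gcd_dvd_left _ _) (hvr ▸ Int.gcd_dvd_left _ _) (hx _ hu hur) (hx _ hv hvr)
  constructor
  · rintro ⟨⟨⟨hu, hv⟩, h⟩, hur⟩
    have hvr : Int.gcd v q = r := Int.gcd_eq_gcd_of_cross_mul_modEq (hW _ hu) (hW _ hv) h ▸ hur
    exact ⟨⟨⟨hu, hur⟩, hv, hvr⟩, (hreduce hu hv hur hvr).mp h⟩
  · rintro ⟨⟨⟨hu, hur⟩, hv, hvr⟩, h⟩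
    exact ⟨⟨⟨hu, hv⟩, (hreduce hu hv hur hvr).mpr h⟩, hur⟩

/-- Identity (108n5orm): for a positive integer `q` and a finite set `W` of coprime
pairs `(u,U)`, the number `R_q(W)` of pairs `((u,U),(v,V)) ∈ W × W` with
`U·v ≡ u·V (mod q)` equals
`∑_{r ∣ q} ∑_{k=1}^{q/r} (1/(q/r)) · |∑_{(u,U)∈W, gcd(u,q)=r} e_{q/r}(U·(u/r)⁻¹·k)|²`,
where `ι` chooses an inverse of `u/r` modulo `q/r`. -/
theorem korobov_count_identity (q : ℕ) (hq : 0 < q) (W : Finset (ℤ × ℤ))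
    (hW : ∀ p ∈ W, Int.gcd p.1 p.2 = 1)
    (ι : ℤ → ℕ → ℤ)
    (hι : ∀ r ∈ q.divisors, ∀ p ∈ W, Int.gcd p.1 (q : ℤ) = r →
      (p.1 / (r : ℤ)) * ι p.1 (q / r) ≡ 1 [ZMOD ((q / r : ℕ) : ℤ)]) :
    ((((W ×ˢ W).filter (fun x => x.1.2 * x.2.1 ≡ x.1.1 * x.2.2 [ZMOD (q : ℤ)])).card : ℝ)) =
      ∑ r ∈ q.divisors, ∑ k ∈ Finset.Icc 1 (q / r),
        (1 / ((q / r : ℕ) : ℝ)) *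
          ‖(∑ p ∈ W.filter (fun p => Int.gcd p.1 (q : ℤ) = r),
            Complex.exp (2 * Real.pi * Complex.I *
              ((p.2 : ℂ) * (ι p.1 (q / r) : ℂ) * (k : ℂ)) / ((q / r : ℕ) : ℂ)))‖ ^ 2 := by
  have hgcd_mem (x : (ℤ × ℤ) × (ℤ × ℤ)) : Int.gcd x.1.1 q ∈ q.divisors :=
    Nat.mem_divisors.mpr ⟨Int.natCast_dvd_natCast.mp (Int.gcd_dvd_right _ _), hq.ne'⟩
  rw [card_eq_sum_card_fiberwise fun x _ => hgcd_mem x]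
  push_cast
  refine sum_congr rfl fun r hr => ?_
  have hrq := Nat.dvd_of_mem_divisors hr
  have hr0 := Nat.pos_of_mem_divisors hr
  have : NeZero (q / r) := ⟨(Nat.div_pos (Nat.le_of_dvd hq hrq) hr0).ne'⟩
  rw [filter_gcd_eq_filter_modEq hW hrq hr0.ne' (x := fun u => ι u (q / r)) (hι r hr),
    card_modEq_eq_sum_norm_sq_sum_exp (q / r) _ fun p : ℤ × ℤ => p.2 * ι p.1 (q / r)]
  push_cast
  rfl
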